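/- Let Ω₁, Ω₂ > 0 and ρ ∈ (0,1), and let f be the bivariate Nakagami-m joint PDF with fading parameter m = 1 (the bivariate Rayleigh PDF). Then for all r₁, r₂ ≥ 0, the joint CDF F(r₁,r₂) = ∫_0^{r₁} ∫_0^{r₂} f(x,y) dy dx equals 1 − exp(−r₁²/Ω₁) · Q₁( √(2/(1−ρ)) · r₂/√Ω₂ , √(2ρ/(1−ρ)) · r₁/√Ω₁ ) − exp(−r₂²/Ω₂) · [ 1 − Q₁( √(2ρ/(1−ρ)) · r₂/√Ω₂ , √(2/(1−ρ)) · r₁/√Ω₁ ) ]. -/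

import Mathlib

open MeasureTheory Real Finset

/-- Modified Bessel function of the first kind of nonnegative integer order. -/
noncomputable def besselI (n : ℕ) (x : ℝ) : ℝ :=
  ∑' k : ℕ, (x / 2) ^ (2 * k + n) / (k.factorial * (k + n).factorial)

/-- Generalized Marcum Q-function of positive integer order `m`. -/
noncomputable def marcumQ (m : ℕ) (a b : ℝ) : ℝ :=
  a ^ (-((m : ℤ) - 1)) *
    ∫ x in Set.Ioi b, x ^ m * Real.exp (-(x ^ 2 + a ^ 2) / 2) * besselI (m - 1) (a * x)

/-- Joint PDF of two correlated Nakagami-`m` random variables with powers `Ω₁, Ω₂`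
and power correlation coefficient `ρ`. -/
noncomputable def nakPDF (m : ℕ) (Ω₁ Ω₂ ρ : ℝ) (r₁ r₂ : ℝ) : ℝ :=
  4 * (m : ℝ) ^ (m + 1) * (r₁ * r₂) ^ m /
      (Real.Gamma m * Ω₁ * Ω₂ * (1 - ρ) * Real.sqrt (Ω₁ * Ω₂ * ρ) ^ (m - 1)) *
    Real.exp (-((m : ℝ) / (1 - ρ)) * (r₁ ^ 2 / Ω₁ + r₂ ^ 2 / Ω₂)) *
    besselI (m - 1) (2 * m * Real.sqrt ρ * r₁ * r₂ / (Real.sqrt (Ω₁ * Ω₂) * (1 - ρ)))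

/-!
Expanding `I₀` in its power series writes the bivariate Rayleigh density as the geometric mixture
`∑ₖ (1 - ρ) ρᵏ gₖ(x; λ₁) gₖ(y; λ₂)`, where `λᵢ = 1 / ((1 - ρ) Ωᵢ)` and `gₖ(·; λ)` is the density
of `√G` for `G ∼ Gamma(k + 1, λ)`. With `πₖ(t) = e⁻ᵗ tᵏ / k!` and `Pₖ = π₀ + ⋯ + πₖ`, one has
`∫₀ʳ gₖ(·; λ) = 1 - Pₖ(λ r²)`, so the CDF is `∑ₖ (1 - ρ) ρᵏ (1 - Pₖ(x)) (1 - Pₖ(y))` with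
`x = λ₁ r₁²`, `y = λ₂ r₂²`; in the same way `Q₁(a, b) = ∑ₖ πₖ(a² / 2) Pₖ(b² / 2)`.
The remaining identity between Poisson series is checked on the double series in `πᵢ(x) πⱼ(y)`:
it comes down to Poisson thinning `e^{-(1 - ρ) t} πᵢ(ρ t) = ρⁱ πᵢ(t)` and to
`ρ^max(i, j) = ρⁱ - [i ≤ j] ρⁱ + [i ≤ j] ρʲ`.
-/

open Filter Topology
open scoped Nat

/-- `ProbabilityTheory.poissonPMFReal` with a real mean. -/
noncomputable def poissonTerm (t : ℝ) (k : ℕ) : ℝ :=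
  exp (-t) * t ^ k / k !

/-- The regularized upper incomplete gamma function `Γ(k + 1, t) / k!`, as a Poisson CDF. -/
noncomputable def poissonCDF (t : ℝ) (k : ℕ) : ℝ :=
  ∑ j ∈ range (k + 1), poissonTerm t j

lemma poissonTerm_nonneg {t : ℝ} (ht : 0 ≤ t) (k : ℕ) : 0 ≤ poissonTerm t k := by
  unfold poissonTerm; positivity

lemma hasSum_poissonTerm (t : ℝ) : HasSum (poissonTerm t) 1 := by
  have h := (NormedSpace.expSeries_div_hasSum_exp t).mul_left (exp (-t))
  rw [← exp_eq_exp_ℝ, ← exp_add, neg_add_cancel, exp_zero] at h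
  exact h.congr_fun fun k => mul_div_assoc _ _ _

lemma poissonCDF_nonneg {t : ℝ} (ht : 0 ≤ t) (k : ℕ) : 0 ≤ poissonCDF t k :=
  sum_nonneg fun j _ => poissonTerm_nonneg ht j

lemma poissonCDF_le_one {t : ℝ} (ht : 0 ≤ t) (k : ℕ) : poissonCDF t k ≤ 1 :=
  sum_le_hasSum _ (fun j _ => poissonTerm_nonneg ht j) (hasSum_poissonTerm t)

lemma poissonTerm_le_one {t : ℝ} (ht : 0 ≤ t) (k : ℕ) : poissonTerm t k ≤ 1 :=
  (single_le_sum (fun j _ => poissonTerm_nonneg ht j) (self_mem_range_succ k)).trans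
    (poissonCDF_le_one ht k)

lemma poissonCDF_zero_left (k : ℕ) : poissonCDF 0 k = 1 := by
  simp [poissonCDF, poissonTerm, sum_range_succ']

lemma hasDerivAt_poissonTerm_succ (t : ℝ) (k : ℕ) :
    HasDerivAt (poissonTerm · (k + 1)) (poissonTerm t k - poissonTerm t (k + 1)) t := by
  have h := (((hasDerivAt_neg t).exp).mul (hasDerivAt_pow (k + 1) t)).div_const ((k + 1)! : ℝ)
  refine h.congr_deriv ?_
  simp only [poissonTerm, Nat.factorial_succ, Nat.cast_mul, Nat.add_sub_cancel]
  field_simp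
  ring

lemma hasDerivAt_poissonCDF (t : ℝ) (k : ℕ) :
    HasDerivAt (poissonCDF · k) (-poissonTerm t k) t := by
  induction k with
  | zero => simpa [poissonCDF, poissonTerm] using (hasDerivAt_neg t).exp
  | succ k ih =>
    simp only [poissonCDF, sum_range_succ _ (k + 1)] at ih ⊢
    exact (ih.add (hasDerivAt_poissonTerm_succ t k)).congr_deriv (by ring)

lemma tendsto_poissonCDF_atTop (k : ℕ) : Tendsto (poissonCDF · k) atTop (𝓝 0) := by
  rw [← sum_const_zero (s := range (k + 1))]
  refine tendsto_finsetSum _ fun j _ => ?_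
  simpa [poissonTerm, mul_comm] using
    (tendsto_pow_mul_exp_neg_atTop_nhds_zero j).div_const (j ! : ℝ)

lemma exp_mul_poissonTerm_mul (ρ t : ℝ) (k : ℕ) :
    exp (-((1 - ρ) * t)) * poissonTerm (ρ * t) k = ρ ^ k * poissonTerm t k := by
  simp only [poissonTerm, mul_pow]
  rw [show -(ρ * t) = (1 - ρ) * t + -t by ring, exp_add, exp_neg ((1 - ρ) * t)]
  field_simp

lemma tsum_geometric_mul_poissonTerm (ρ t : ℝ) :
    ∑' k, ρ ^ k * poissonTerm t k = exp (-((1 - ρ) * t)) := by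
  simp_rw [← exp_mul_poissonTerm_mul, tsum_mul_left, (hasSum_poissonTerm _).tsum_eq, mul_one]

/-- The density of `√G` for `G ∼ Gamma(k + 1)` with rate `lam`, i.e. the Nakagami density of
shape `k + 1` and spread `(k + 1) / lam`. -/
noncomputable def sqrtGammaPDF (lam : ℝ) (k : ℕ) (x : ℝ) : ℝ :=
  2 * lam * x * poissonTerm (lam * x ^ 2) k

section SqrtGamma

variable {lam : ℝ} {k : ℕ}

lemma sqrtGammaPDF_nonneg (hlam : 0 ≤ lam) {x : ℝ} (hx : 0 ≤ x) : 0 ≤ sqrtGammaPDF lam k x :=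
  mul_nonneg (by positivity) (poissonTerm_nonneg (by positivity) k)

lemma sqrtGammaPDF_le (hlam : 0 ≤ lam) {x : ℝ} (hx : 0 ≤ x) : sqrtGammaPDF lam k x ≤ 2 * lam * x :=
  mul_le_of_le_one_right (by positivity) (poissonTerm_le_one (by positivity) k)

lemma continuous_sqrtGammaPDF : Continuous (sqrtGammaPDF lam k) := by
  unfold sqrtGammaPDF poissonTerm; fun_prop

lemma hasDerivAt_neg_poissonCDF_mul_sq (x : ℝ) :
    HasDerivAt (fun x => -poissonCDF (lam * x ^ 2) k) (sqrtGammaPDF lam k x) x := by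
  have h := ((hasDerivAt_poissonCDF (lam * x ^ 2) k).comp x
    ((hasDerivAt_pow 2 x).const_mul lam)).neg
  refine h.congr_deriv ?_
  simp only [sqrtGammaPDF]
  ring

lemma integral_sqrtGammaPDF (r : ℝ) :
    ∫ x in (0 : ℝ)..r, sqrtGammaPDF lam k x = 1 - poissonCDF (lam * r ^ 2) k := by
  rw [intervalIntegral.integral_eq_sub_of_hasDerivAt
    (fun x _ => hasDerivAt_neg_poissonCDF_mul_sq x)
    (continuous_sqrtGammaPDF.intervalIntegrable _ _)]
  simp [poissonCDF_zero_left]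
  ring

lemma tendsto_neg_poissonCDF_mul_sq_atTop (hlam : 0 < lam) :
    Tendsto (fun x => -poissonCDF (lam * x ^ 2) k) atTop (𝓝 0) := by
  simpa using ((tendsto_poissonCDF_atTop k).comp
    ((tendsto_pow_atTop two_ne_zero).const_mul_atTop hlam)).neg

lemma integrableOn_Ioi_sqrtGammaPDF (hlam : 0 < lam) {b : ℝ} (hb : 0 ≤ b) :
    IntegrableOn (sqrtGammaPDF lam k) (Set.Ioi b) :=
  integrableOn_Ioi_deriv_of_nonneg
    (hasDerivAt_neg_poissonCDF_mul_sq b).continuousAt.continuousWithinAt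
    (fun x _ => hasDerivAt_neg_poissonCDF_mul_sq x)
    (fun _ hx => sqrtGammaPDF_nonneg hlam.le (hb.trans (le_of_lt hx)))
    (tendsto_neg_poissonCDF_mul_sq_atTop hlam)

lemma integral_Ioi_sqrtGammaPDF (hlam : 0 < lam) {b : ℝ} (hb : 0 ≤ b) :
    ∫ x in Set.Ioi b, sqrtGammaPDF lam k x = poissonCDF (lam * b ^ 2) k := by
  rw [integral_Ioi_of_hasDerivAt_of_nonneg
    (hasDerivAt_neg_poissonCDF_mul_sq b).continuousAt.continuousWithinAt
    (fun x _ => hasDerivAt_neg_poissonCDF_mul_sq x)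
    (fun _ hx => sqrtGammaPDF_nonneg hlam.le (hb.trans (le_of_lt hx)))
    (tendsto_neg_poissonCDF_mul_sq_atTop hlam)]
  ring

end SqrtGamma

theorem integral_tsum_of_nonneg {α ι : Type*} [MeasurableSpace α] [Countable ι] {μ : Measure α}
    {f : ι → α → ℝ} (hf : ∀ i, Integrable (f i) μ) (hf0 : ∀ i, 0 ≤ᵐ[μ] f i)
    (hsum : Summable fun i => ∫ a, f i a ∂μ) :
    ∫ a, ∑' i, f i a ∂μ = ∑' i, ∫ a, f i a ∂μ := by
  refine (integral_tsum_of_summable_integral_norm hf ?_).symm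
  convert hsum using 2 with i
  exact integral_congr_ae ((hf0 i).mono fun a ha => norm_of_nonneg ha)

section Mixture

variable {lam : ℝ} {w : ℕ → ℝ}

lemma integral_Ioi_tsum_mul_sqrtGammaPDF (hw0 : ∀ k, 0 ≤ w k) (hw : Summable w) (hlam : 0 < lam)
    {b : ℝ} (hb : 0 ≤ b) :
    ∫ x in Set.Ioi b, ∑' k, w k * sqrtGammaPDF lam k x
      = ∑' k, w k * poissonCDF (lam * b ^ 2) k := by
  have hP : 0 ≤ lam * b ^ 2 := by positivity
  simp_rw [← integral_Ioi_sqrtGammaPDF hlam hb, ← integral_const_mul]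
  refine integral_tsum_of_nonneg (fun k => (integrableOn_Ioi_sqrtGammaPDF hlam hb).const_mul (w k))
    (fun k => ae_restrict_of_forall_mem measurableSet_Ioi fun x hx =>
      mul_nonneg (hw0 k) (sqrtGammaPDF_nonneg hlam.le (hb.trans (le_of_lt hx)))) ?_
  simp_rw [integral_const_mul, integral_Ioi_sqrtGammaPDF hlam hb]
  exact hw.of_nonneg_of_le (fun k => mul_nonneg (hw0 k) (poissonCDF_nonneg hP k))
    fun k => mul_le_of_le_one_right (hw0 k) (poissonCDF_le_one hP k)

lemma integral_tsum_mul_sqrtGammaPDF (hw0 : ∀ k, 0 ≤ w k) (hw : Summable w) (hlam : 0 ≤ lam)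
    {r : ℝ} (hr : 0 ≤ r) :
    ∫ x in (0 : ℝ)..r, ∑' k, w k * sqrtGammaPDF lam k x
      = ∑' k, w k * (1 - poissonCDF (lam * r ^ 2) k) := by
  have hP : 0 ≤ lam * r ^ 2 := by positivity
  simp_rw [← integral_sqrtGammaPDF, ← intervalIntegral.integral_const_mul,
    intervalIntegral.integral_of_le hr]
  refine integral_tsum_of_nonneg
    (fun k => (continuous_sqrtGammaPDF.integrableOn_Ioc).const_mul (w k))
    (fun k => ae_restrict_of_forall_mem measurableSet_Ioc fun x hx =>
      mul_nonneg (hw0 k) (sqrtGammaPDF_nonneg hlam (le_of_lt hx.1))) ?_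
  simp_rw [← intervalIntegral.integral_of_le hr, intervalIntegral.integral_const_mul,
    integral_sqrtGammaPDF]
  exact hw.of_nonneg_of_le (fun k => mul_nonneg (hw0 k) (sub_nonneg.2 (poissonCDF_le_one hP k)))
    fun k => mul_le_of_le_one_right (hw0 k) (sub_le_self _ (poissonCDF_nonneg hP k))

end Mixture

lemma integral_integral_tsum_mul_sqrtGammaPDF_mul {w : ℕ → ℝ} (hw0 : ∀ k, 0 ≤ w k)
    (hw : Summable w) {lam₁ lam₂ r₁ r₂ : ℝ} (hlam₁ : 0 ≤ lam₁) (hlam₂ : 0 ≤ lam₂)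
    (hr₁ : 0 ≤ r₁) (hr₂ : 0 ≤ r₂) :
    ∫ x in (0 : ℝ)..r₁, ∫ y in (0 : ℝ)..r₂,
        ∑' k, w k * sqrtGammaPDF lam₁ k x * sqrtGammaPDF lam₂ k y
      = ∑' k, w k * (1 - poissonCDF (lam₁ * r₁ ^ 2) k) * (1 - poissonCDF (lam₂ * r₂ ^ 2) k) := by
  have hP₂ : 0 ≤ lam₂ * r₂ ^ 2 := by positivity
  have hw₂ : ∀ k, 0 ≤ w k * (1 - poissonCDF (lam₂ * r₂ ^ 2) k) :=
    fun k => mul_nonneg (hw0 k) (sub_nonneg.2 (poissonCDF_le_one hP₂ k))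
  have inner : ∀ x ∈ Set.uIcc 0 r₁,
      ∫ y in (0 : ℝ)..r₂, ∑' k, w k * sqrtGammaPDF lam₁ k x * sqrtGammaPDF lam₂ k y
        = ∑' k, w k * (1 - poissonCDF (lam₂ * r₂ ^ 2) k) * sqrtGammaPDF lam₁ k x := by
    intro x hx
    have hx0 : 0 ≤ x := (Set.uIcc_of_le hr₁ ▸ hx).1
    rw [integral_tsum_mul_sqrtGammaPDF (fun k => mul_nonneg (hw0 k) (sqrtGammaPDF_nonneg hlam₁ hx0))
      ((hw.mul_right (2 * lam₁ * x)).of_nonneg_of_le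
        (fun k => mul_nonneg (hw0 k) (sqrtGammaPDF_nonneg hlam₁ hx0))
        fun k => mul_le_mul_of_nonneg_left (sqrtGammaPDF_le hlam₁ hx0) (hw0 k)) hlam₂ hr₂]
    exact tsum_congr fun k => by ring
  rw [intervalIntegral.integral_congr inner, integral_tsum_mul_sqrtGammaPDF hw₂
    (hw.of_nonneg_of_le hw₂ fun k => mul_le_of_le_one_right (hw0 k)
      (sub_le_self _ (poissonCDF_nonneg hP₂ k))) hlam₁ hr₁]
  exact tsum_congr fun k => by ring

lemma marcumQ_one_eq_tsum (a : ℝ) {b : ℝ} (hb : 0 ≤ b) :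
    marcumQ 1 a b = ∑' k, poissonTerm (a ^ 2 / 2) k * poissonCDF (b ^ 2 / 2) k := by
  have hmix : ∀ x : ℝ, x ^ 1 * exp (-(x ^ 2 + a ^ 2) / 2) * besselI (1 - 1) (a * x)
      = ∑' k, poissonTerm (a ^ 2 / 2) k * sqrtGammaPDF (1 / 2) k x := by
    intro x
    rw [besselI, ← tsum_mul_left]
    refine tsum_congr fun k => ?_
    rw [show -(x ^ 2 + a ^ 2) / 2 = -(a ^ 2 / 2) + -(1 / 2 * x ^ 2) by ring, exp_add]
    simp only [sqrtGammaPDF, poissonTerm, Nat.sub_self, add_zero]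
    field_simp
    ring
  rw [marcumQ, Nat.cast_one, sub_self, neg_zero, zpow_zero, one_mul, integral_congr_ae
    (Eventually.of_forall hmix), integral_Ioi_tsum_mul_sqrtGammaPDF
    (fun k => poissonTerm_nonneg (by positivity) k) (hasSum_poissonTerm _).summable one_half_pos hb]
  simp_rw [one_div_mul_eq_div]

lemma nakPDF_one_eq_tsum {Ω₁ Ω₂ ρ : ℝ} (hΩ₁ : 0 < Ω₁) (hΩ₂ : 0 < Ω₂) (hρ0 : 0 ≤ ρ) (hρ1 : ρ < 1)
    (x y : ℝ) :
    nakPDF 1 Ω₁ Ω₂ ρ x y = ∑' k, (1 - ρ) * ρ ^ k *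
      sqrtGammaPDF ((1 - ρ) * Ω₁)⁻¹ k x * sqrtGammaPDF ((1 - ρ) * Ω₂)⁻¹ k y := by
  have h1ρ : 1 - ρ ≠ 0 := (sub_pos.2 hρ1).ne'
  have hz : (2 * ((1 : ℕ) : ℝ) * sqrt ρ * x * y / (sqrt (Ω₁ * Ω₂) * (1 - ρ)) / 2) ^ 2
      = ρ * (((1 - ρ) * Ω₁)⁻¹ * x ^ 2) * (((1 - ρ) * Ω₂)⁻¹ * y ^ 2) := by
    rw [Nat.cast_one, div_pow, div_pow, mul_pow, mul_pow, mul_pow, mul_pow, mul_pow, sq_sqrt hρ0,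
      sq_sqrt (by positivity)]
    field_simp
  have hexp : exp (-((1 : ℕ) / (1 - ρ)) * (x ^ 2 / Ω₁ + y ^ 2 / Ω₂))
      = exp (-((1 - ρ) * Ω₁)⁻¹ * x ^ 2) * exp (-((1 - ρ) * Ω₂)⁻¹ * y ^ 2) := by
    rw [← exp_add]
    congr 1
    field_simp
    ring
  rw [nakPDF, besselI, hexp, ← tsum_mul_left]
  refine tsum_congr fun k => ?_
  rw [Nat.sub_self, add_zero, add_zero, pow_mul, hz, mul_pow, mul_pow]
  simp only [sqrtGammaPDF, poissonTerm, Nat.cast_one, Gamma_one, one_pow, pow_one, pow_zero,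
    mul_one, neg_mul]
  field_simp
  ring

section Series

variable {ρ : ℝ}

lemma hasSum_geometric_ite_le (hρ0 : 0 ≤ ρ) (hρ1 : ρ < 1) (m : ℕ) :
    HasSum (fun k => if m ≤ k then ρ ^ k else 0) (ρ ^ m * (1 - ρ)⁻¹) := by
  rw [← (add_right_injective m).hasSum_iff fun k hk => if_neg fun hmk =>
    hk ⟨k - m, Nat.add_sub_cancel' hmk⟩]
  simpa [Function.comp_def, pow_add] using (hasSum_geometric_of_lt_one hρ0 hρ1).mul_left (ρ ^ m)

variable {x y : ℝ}

lemma summable_mul_poissonTerm_mul_poissonTerm {c : ℕ × ℕ → ℝ} (hc0 : ∀ p, 0 ≤ c p)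
    (hc1 : ∀ p, c p ≤ 1) (hx : 0 ≤ x) (hy : 0 ≤ y) :
    Summable fun p : ℕ × ℕ => c p * (poissonTerm x p.1 * poissonTerm y p.2) := by
  have hprod : ∀ p : ℕ × ℕ, 0 ≤ poissonTerm x p.1 * poissonTerm y p.2 :=
    fun p => mul_nonneg (poissonTerm_nonneg hx _) (poissonTerm_nonneg hy _)
  exact ((hasSum_poissonTerm x).summable.mul_of_nonneg (hasSum_poissonTerm y).summable
    (poissonTerm_nonneg hx) (poissonTerm_nonneg hy)).of_nonneg_of_le
    (fun p => mul_nonneg (hc0 p) (hprod p)) fun p => mul_le_of_le_one_left (hprod p) (hc1 p)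

lemma tsum_poissonTerm_mul_poissonCDF (hx : 0 ≤ x) (hy : 0 ≤ y) :
    ∑' k, poissonTerm y k * poissonCDF x k
      = ∑' p : ℕ × ℕ, (if p.1 ≤ p.2 then 1 else 0) * (poissonTerm x p.1 * poissonTerm y p.2) := by
  have hsum := summable_mul_poissonTerm_mul_poissonTerm (c := fun p => if p.1 ≤ p.2 then 1 else 0)
    (fun p => by split_ifs <;> norm_num) (fun p => by split_ifs <;> norm_num) hx hy
  rw [hsum.tsum_prod, ← hsum.tsum_comm]
  refine tsum_congr fun k => ?_
  rw [tsum_eq_sum (s := range (k + 1)) fun i hi => by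
    rw [if_neg (by simpa [Nat.lt_succ_iff] using hi), zero_mul], poissonCDF, mul_sum]
  exact sum_congr rfl fun i hi => by
    rw [if_pos (Nat.lt_succ_iff.1 (mem_range.1 hi)), one_mul, mul_comm]

lemma summable_geometric_mul_of_le_one (hρ0 : 0 ≤ ρ) (hρ1 : ρ < 1) {f : ℕ → ℝ} (hf0 : ∀ k, 0 ≤ f k)
    (hf1 : ∀ k, f k ≤ 1) : Summable fun k => ρ ^ k * f k :=
  (summable_geometric_of_lt_one hρ0 hρ1).of_nonneg_of_le
    (fun k => mul_nonneg (pow_nonneg hρ0 k) (hf0 k))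
    fun k => mul_le_of_le_one_right (pow_nonneg hρ0 k) (hf1 k)

lemma tsum_geometric_mul_poissonCDF_mul_poissonCDF (hρ0 : 0 ≤ ρ) (hρ1 : ρ < 1) (hx : 0 ≤ x)
    (hy : 0 ≤ y) :
    ∑' k, ρ ^ k * (poissonCDF x k * poissonCDF y k)
      = (1 - ρ)⁻¹ * ∑' p : ℕ × ℕ, ρ ^ max p.1 p.2 * (poissonTerm x p.1 * poissonTerm y p.2) := by
  set H : ℕ → ℕ × ℕ → ℝ := fun k p =>
    (if max p.1 p.2 ≤ k then ρ ^ k else 0) * (poissonTerm x p.1 * poissonTerm y p.2)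
  have hH0 : ∀ k p, 0 ≤ H k p := fun k p => mul_nonneg (by split_ifs <;> positivity)
    (mul_nonneg (poissonTerm_nonneg hx _) (poissonTerm_nonneg hy _))
  have hrow : ∀ k, HasSum (H k) (ρ ^ k * (poissonCDF x k * poissonCDF y k)) := by
    intro k
    have h : HasSum (H k) (∑ p ∈ range (k + 1) ×ˢ range (k + 1), H k p) :=
      hasSum_sum_of_ne_finset_zero fun p hp => by
        simp only [mem_product, mem_range, Nat.lt_succ_iff] at hp
        have : ¬max p.1 p.2 ≤ k := by omega
        simp only [H, if_neg this, zero_mul]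
    convert h using 1
    rw [sum_product, poissonCDF, poissonCDF, sum_mul_sum, mul_sum]
    refine sum_congr rfl fun i hi => ?_
    rw [mul_sum]
    refine sum_congr rfl fun j hj => ?_
    simp only [mem_range, Nat.lt_succ_iff] at hi hj
    simp only [H, if_pos (max_le hi hj)]
  have hH : Summable (Function.uncurry H) := by
    refine (summable_prod_of_nonneg fun q => hH0 q.1 q.2).2 ⟨fun k => (hrow k).summable, ?_⟩
    simp_rw [(hrow _).tsum_eq]
    exact summable_geometric_mul_of_le_one hρ0 hρ1
      (fun k => mul_nonneg (poissonCDF_nonneg hx k) (poissonCDF_nonneg hy k)) fun k =>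
        mul_le_one₀ (poissonCDF_le_one hx k) (poissonCDF_nonneg hy k) (poissonCDF_le_one hy k)
  calc ∑' k, ρ ^ k * (poissonCDF x k * poissonCDF y k) = ∑' k, ∑' p, H k p :=
        tsum_congr fun k => (hrow k).tsum_eq.symm
    _ = ∑' p, ∑' k, H k p := hH.tsum_comm.symm
    _ = _ := by
      rw [← tsum_mul_left]
      exact tsum_congr fun p =>
        (((hasSum_geometric_ite_le hρ0 hρ1 _).mul_right _).tsum_eq).trans (by ring)

lemma tsum_geometric_mul_poissonCDF (hρ0 : 0 ≤ ρ) (hρ1 : ρ < 1) (hx : 0 ≤ x) :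
    ∑' k, ρ ^ k * poissonCDF x k = (1 - ρ)⁻¹ * exp (-((1 - ρ) * x)) := by
  have h := tsum_geometric_mul_poissonCDF_mul_poissonCDF hρ0 hρ1 hx le_rfl
  simp only [poissonCDF_zero_left, mul_one] at h
  rw [h, (summable_mul_poissonTerm_mul_poissonTerm (fun p => pow_nonneg hρ0 _)
    (fun p => pow_le_one₀ hρ0 hρ1.le) hx le_rfl).tsum_prod, ← tsum_geometric_mul_poissonTerm]
  congr 1
  refine tsum_congr fun i => ?_
  rw [tsum_eq_single 0 fun j hj => by simp [poissonTerm, hj]]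
  simp [poissonTerm]

lemma tsum_geometric_mul_one_sub_poissonCDF_mul_one_sub_poissonCDF_eq_tsum_pow_max (hρ0 : 0 ≤ ρ)
    (hρ1 : ρ < 1) (hx : 0 ≤ x) (hy : 0 ≤ y) :
    ∑' k, (1 - ρ) * ρ ^ k * (1 - poissonCDF x k) * (1 - poissonCDF y k)
      = 1 - exp (-((1 - ρ) * x)) - exp (-((1 - ρ) * y))
        + ∑' p : ℕ × ℕ, ρ ^ max p.1 p.2 * (poissonTerm x p.1 * poissonTerm y p.2) := by
  have h1ρ : 1 - ρ ≠ 0 := (sub_pos.2 hρ1).ne'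
  have hgeom := summable_geometric_of_lt_one hρ0 hρ1
  have sx := summable_geometric_mul_of_le_one hρ0 hρ1 (poissonCDF_nonneg hx) (poissonCDF_le_one hx)
  have sy := summable_geometric_mul_of_le_one hρ0 hρ1 (poissonCDF_nonneg hy) (poissonCDF_le_one hy)
  have sxy := summable_geometric_mul_of_le_one hρ0 hρ1
    (fun k => mul_nonneg (poissonCDF_nonneg hx k) (poissonCDF_nonneg hy k))
    fun k => mul_le_one₀ (poissonCDF_le_one hx k) (poissonCDF_nonneg hy k) (poissonCDF_le_one hy k)
  have expand : ∀ k, (1 - ρ) * ρ ^ k * (1 - poissonCDF x k) * (1 - poissonCDF y k)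
      = (1 - ρ) * (ρ ^ k - ρ ^ k * poissonCDF x k - ρ ^ k * poissonCDF y k
        + ρ ^ k * (poissonCDF x k * poissonCDF y k)) := fun k => by ring
  rw [tsum_congr expand, tsum_mul_left, Summable.tsum_add ((hgeom.sub sx).sub sy) sxy,
    Summable.tsum_sub (hgeom.sub sx) sy, Summable.tsum_sub hgeom sx,
    tsum_geometric_of_lt_one hρ0 hρ1, tsum_geometric_mul_poissonCDF hρ0 hρ1 hx,
    tsum_geometric_mul_poissonCDF hρ0 hρ1 hy,
    tsum_geometric_mul_poissonCDF_mul_poissonCDF hρ0 hρ1 hx hy, mul_add, mul_sub, mul_sub,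
    mul_inv_cancel₀ h1ρ, mul_inv_cancel_left₀ h1ρ, mul_inv_cancel_left₀ h1ρ,
    mul_inv_cancel_left₀ h1ρ]

lemma tsum_pow_max_mul_poissonTerm_mul_poissonTerm (hρ0 : 0 ≤ ρ) (hρ1 : ρ ≤ 1) (hx : 0 ≤ x)
    (hy : 0 ≤ y) :
    ∑' p : ℕ × ℕ, ρ ^ max p.1 p.2 * (poissonTerm x p.1 * poissonTerm y p.2)
      = ∑' p : ℕ × ℕ, ρ ^ p.1 * (poissonTerm x p.1 * poissonTerm y p.2)
        - ∑' p : ℕ × ℕ, (if p.1 ≤ p.2 then ρ ^ p.1 else 0) * (poissonTerm x p.1 * poissonTerm y p.2)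
        + ∑' p : ℕ × ℕ, (if p.1 ≤ p.2 then ρ ^ p.2 else 0) * (poissonTerm x p.1 * poissonTerm y p.2)
    := by
  have hpow : ∀ n : ℕ, ρ ^ n ≤ 1 := fun n => pow_le_one₀ hρ0 hρ1
  have hite : ∀ (P : Prop) [Decidable P] (n : ℕ), 0 ≤ (if P then ρ ^ n else 0) ∧
      (if P then ρ ^ n else 0) ≤ 1 := fun P _ n => by
    split_ifs
    exacts [⟨pow_nonneg hρ0 n, hpow n⟩, ⟨le_rfl, zero_le_one⟩]
  have s₁ := summable_mul_poissonTerm_mul_poissonTerm (fun p => pow_nonneg hρ0 p.1)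
    (fun p => hpow p.1) hx hy
  have s₂ := summable_mul_poissonTerm_mul_poissonTerm (fun p => (hite (p.1 ≤ p.2) p.1).1)
    (fun p => (hite (p.1 ≤ p.2) p.1).2) hx hy
  have s₃ := summable_mul_poissonTerm_mul_poissonTerm (fun p => (hite (p.1 ≤ p.2) p.2).1)
    (fun p => (hite (p.1 ≤ p.2) p.2).2) hx hy
  rw [← Summable.tsum_sub s₁ s₂, ← Summable.tsum_add (s₁.sub s₂) s₃]
  refine tsum_congr fun p => ?_
  split_ifs with h
  · rw [max_eq_right h]
    ring
  · rw [max_eq_left (by omega)]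
    ring

theorem tsum_geometric_mul_one_sub_poissonCDF_mul_one_sub_poissonCDF (hρ0 : 0 ≤ ρ) (hρ1 : ρ < 1)
    (hx : 0 ≤ x) (hy : 0 ≤ y) :
    ∑' k, (1 - ρ) * ρ ^ k * (1 - poissonCDF x k) * (1 - poissonCDF y k)
      = 1 - exp (-((1 - ρ) * x)) * ∑' k, poissonTerm y k * poissonCDF (ρ * x) k
        - exp (-((1 - ρ) * y)) * (1 - ∑' k, poissonTerm (ρ * y) k * poissonCDF x k) := by
  have hA : exp (-((1 - ρ) * x))
      = ∑' p : ℕ × ℕ, ρ ^ p.1 * (poissonTerm x p.1 * poissonTerm y p.2) := calc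
    _ = (∑' i, ρ ^ i * poissonTerm x i) * ∑' j, poissonTerm y j := by
      rw [tsum_geometric_mul_poissonTerm, (hasSum_poissonTerm y).tsum_eq, mul_one]
    _ = _ := by
      rw [Summable.tsum_mul_tsum (summable_geometric_mul_of_le_one hρ0 hρ1 (poissonTerm_nonneg hx)
        (poissonTerm_le_one hx)) (hasSum_poissonTerm y).summable (by
          simpa only [mul_assoc] using summable_mul_poissonTerm_mul_poissonTerm
            (fun p => pow_nonneg hρ0 p.1) (fun p => pow_le_one₀ hρ0 hρ1.le) hx hy)]
      exact tsum_congr fun p => mul_assoc _ _ _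
  have hB : exp (-((1 - ρ) * x)) * ∑' k, poissonTerm y k * poissonCDF (ρ * x) k
      = ∑' p : ℕ × ℕ,
        (if p.1 ≤ p.2 then ρ ^ p.1 else 0) * (poissonTerm x p.1 * poissonTerm y p.2) := by
    rw [tsum_poissonTerm_mul_poissonCDF (by positivity) hy, ← tsum_mul_left]
    refine tsum_congr fun p => ?_
    split_ifs
    · rw [one_mul, ← mul_assoc, exp_mul_poissonTerm_mul, mul_assoc]
    · simp
  have hC : exp (-((1 - ρ) * y)) * ∑' k, poissonTerm (ρ * y) k * poissonCDF x k
      = ∑' p : ℕ × ℕ,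
        (if p.1 ≤ p.2 then ρ ^ p.2 else 0) * (poissonTerm x p.1 * poissonTerm y p.2) := by
    rw [tsum_poissonTerm_mul_poissonCDF hx (by positivity), ← tsum_mul_left]
    refine tsum_congr fun p => ?_
    split_ifs
    · rw [one_mul, mul_left_comm, exp_mul_poissonTerm_mul]
      ring
    · simp
  linear_combination
    tsum_geometric_mul_one_sub_poissonCDF_mul_one_sub_poissonCDF_eq_tsum_pow_max hρ0 hρ1 hx hy
    + tsum_pow_max_mul_poissonTerm_mul_poissonTerm hρ0 hρ1.le hx hy + hB - hC - hA

end Series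

theorem bivariate_rayleigh_cdf (Ω₁ Ω₂ : ℝ) (hΩ₁ : 0 < Ω₁) (hΩ₂ : 0 < Ω₂)
    (ρ : ℝ) (hρ : ρ ∈ Set.Ioo (0 : ℝ) 1) (r₁ r₂ : ℝ) (h₁ : 0 ≤ r₁) (h₂ : 0 ≤ r₂) :
    (∫ x in (0:ℝ)..r₁, ∫ y in (0:ℝ)..r₂, nakPDF 1 Ω₁ Ω₂ ρ x y) =
      1 - Real.exp (-r₁ ^ 2 / Ω₁) *
            marcumQ 1 (Real.sqrt (2 / (1 - ρ)) * (r₂ / Real.sqrt Ω₂))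
              (Real.sqrt (2 * ρ / (1 - ρ)) * (r₁ / Real.sqrt Ω₁)) -
        Real.exp (-r₂ ^ 2 / Ω₂) *
          (1 - marcumQ 1 (Real.sqrt (2 * ρ / (1 - ρ)) * (r₂ / Real.sqrt Ω₂))
              (Real.sqrt (2 / (1 - ρ)) * (r₁ / Real.sqrt Ω₁))) := by
  obtain ⟨hρ0, hρ1⟩ := hρ
  have h1ρ : 0 < 1 - ρ := sub_pos.2 hρ1
  have half_sq : ∀ {c r Ω : ℝ}, 0 ≤ c → 0 ≤ Ω →
      (sqrt c * (r / sqrt Ω)) ^ 2 / 2 = c / 2 * (r ^ 2 / Ω) :=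
    fun hc hΩ => by rw [mul_pow, div_pow, sq_sqrt hc, sq_sqrt hΩ]; ring
  simp_rw [nakPDF_one_eq_tsum hΩ₁ hΩ₂ hρ0.le hρ1]
  rw [integral_integral_tsum_mul_sqrtGammaPDF_mul (fun k => by positivity)
      ((summable_geometric_of_lt_one hρ0.le hρ1).mul_left (1 - ρ)) (by positivity) (by positivity)
      h₁ h₂,
    marcumQ_one_eq_tsum _ (by positivity), marcumQ_one_eq_tsum _ (by positivity),
    half_sq (by positivity) hΩ₁.le, half_sq (by positivity) hΩ₁.le,
    half_sq (by positivity) hΩ₂.le, half_sq (by positivity) hΩ₂.le]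
  have rescale : ∀ {r Ω : ℝ}, 0 < Ω →
      2 / (1 - ρ) / 2 * (r ^ 2 / Ω) = ((1 - ρ) * Ω)⁻¹ * r ^ 2 ∧
      2 * ρ / (1 - ρ) / 2 * (r ^ 2 / Ω) = ρ * (((1 - ρ) * Ω)⁻¹ * r ^ 2) ∧
      -r ^ 2 / Ω = -((1 - ρ) * (((1 - ρ) * Ω)⁻¹ * r ^ 2)) :=
    fun hΩ => ⟨by field_simp, by field_simp, by field_simp⟩
  obtain ⟨a₁, b₁, e₁⟩ := rescale (r := r₁) hΩ₁
  obtain ⟨a₂, b₂, e₂⟩ := rescale (r := r₂) hΩ₂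
  rw [a₁, b₁, e₁, a₂, b₂, e₂]
  exact tsum_geometric_mul_one_sub_poissonCDF_mul_one_sub_poissonCDF hρ0.le hρ1 (by positivity)
    (by positivity)
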